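/- Let 𝓕 = {C_λ}_{λ∈U} be a family of real plane curves of degree d satisfying the standing assumptions, with finite base locus B(ℂ), and set ν_opt := d² − #B(ℂ) + 1. Fix λ ∈ U and take ν_opt arbitrary distinct real points p₁,…,p_{ν_opt} ∈ C_λ \ B_aff. If the family 𝓕 is Hough regular, then ⋂_{j=1}^{ν_opt} Γ_{p_j}(𝓕) ∩ U = {λ}. -/

import Mathlib

open MvPolynomial

noncomputable section

/-- `fLam F lam` is the plane polynomial `f_λ(x,y) = F(x,y;λ)`. -/
def fLam {t : ℕ} (F : MvPolynomial (Fin 2) (MvPolynomial (Fin t) ℝ)) (lam : Fin t → ℝ) :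
    MvPolynomial (Fin 2) ℝ :=
  MvPolynomial.map (MvPolynomial.eval lam) F

/-- `houghPoly F p` is the polynomial `f_p(Λ) = F(x_p,y_p;Λ)` in the parameters. -/
def houghPoly {t : ℕ} (F : MvPolynomial (Fin 2) (MvPolynomial (Fin t) ℝ)) (p : Fin 2 → ℝ) :
    MvPolynomial (Fin t) ℝ :=
  MvPolynomial.eval₂ (RingHom.id _) (fun i => MvPolynomial.C (p i)) F

/-- The Hough transform `Γ_p(𝓕) = {λ ∈ ℝ^t : f_p(λ) = 0}`. -/
def Gamma {t : ℕ} (F : MvPolynomial (Fin 2) (MvPolynomial (Fin t) ℝ)) (p : Fin 2 → ℝ) :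
    Set (Fin t → ℝ) :=
  {mu | MvPolynomial.eval mu (houghPoly F p) = 0}

/-- The curve `C_λ = {(x,y) ∈ ℝ² : f_λ(x,y) = 0}`. -/
def Curve {t : ℕ} (F : MvPolynomial (Fin 2) (MvPolynomial (Fin t) ℝ)) (lam : Fin t → ℝ) :
    Set (Fin 2 → ℝ) :=
  {p | MvPolynomial.eval p (fLam F lam) = 0}

/-- The affine base locus `B_aff = {p ∈ ℂ² : f_λ(p) = 0 for all λ ∈ U}`. -/
def Baff {t : ℕ} (F : MvPolynomial (Fin 2) (MvPolynomial (Fin t) ℝ)) (U : Set (Fin t → ℝ)) :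
    Set (Fin 2 → ℂ) :=
  {q | ∀ lam ∈ U, MvPolynomial.aeval q (fLam F lam) = 0}

/-- The degree-`d` homogenization of a plane polynomial, viewed with complex coefficients:
the defining polynomial of the projective closure in `ℙ²(ℂ)`. -/
def projPoly (d : ℕ) (g : MvPolynomial (Fin 2) ℝ) : MvPolynomial (Fin 3) ℂ :=
  g.support.sum fun m =>
    MvPolynomial.monomial
      (Finsupp.equivFunOnFinite.symm ![m 0, m 1, d - (m 0 + m 1)])
      ((g.coeff m : ℝ) : ℂ)

/-- The base locus `B(ℂ)`: points of `ℙ²(ℂ)` lying on the projective closure of every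
curve `C_λ`, `λ ∈ U`. -/
def BaseLocus {t : ℕ} (F : MvPolynomial (Fin 2) (MvPolynomial (Fin t) ℝ))
    (U : Set (Fin t → ℝ)) (d : ℕ) : Set (Projectivization ℂ (Fin 3 → ℂ)) :=
  {P | ∀ lam ∈ U, MvPolynomial.eval P.rep (projPoly d (fLam F lam)) = 0}

/-- Standing assumptions: each `f_λ` is non-constant, irreducible of total degree `d`, its
homogenization is irreducible, and `C_λ` has infinitely many real points. -/
def StandingAssumptions {t : ℕ} (F : MvPolynomial (Fin 2) (MvPolynomial (Fin t) ℝ))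
    (U : Set (Fin t → ℝ)) (d : ℕ) : Prop :=
  ∀ lam ∈ U, 0 < (fLam F lam).totalDegree ∧ (fLam F lam).totalDegree = d ∧
    Irreducible (fLam F lam) ∧ Irreducible (projPoly d (fLam F lam)) ∧
    (Curve F lam).Infinite

/-- The family `𝓕 = {C_λ}` is Hough regular if `C_λ = C_λ'` implies `λ = λ'` for `λ, λ' ∈ U`. -/
def HoughRegular {t : ℕ} (F : MvPolynomial (Fin 2) (MvPolynomial (Fin t) ℝ))
    (U : Set (Fin t → ℝ)) : Prop :=
  ∀ lam ∈ U, ∀ lam' ∈ U, Curve F lam = Curve F lam' → lam = lam'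

/-!
If a second parameter `μ ∈ U`, `μ ≠ λ`, also lay in every `Γ_{p_j}`, then `C_λ` and `C_μ` would
both pass through the `p_j`. Hough regularity makes their projective closures non-associated, and
both are irreducible, so by Bézout's bound they meet in at most `d²` points of `ℙ²(ℂ)`. But they
share the whole base locus and, disjointly from it, the `ν_opt = d² - #B(ℂ) + 1` points `p_j`.

The bound is proved by counting dimensions of forms. In degree `n = #S + d + e`, forms separate
the points of a finite set `S ⊆ ℙ²`, while the multiples of `f` and `g` vanish on `S`; these
multiples span a space of codimension at most `d e`, because a common multiple of `f` and `g` is a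
multiple of `f g`.
-/

open Module
open scoped LinearAlgebra.Projectivization

theorem Submodule.finrank_map_add_finrank_le {K M N : Type*} [Field K] [AddCommGroup M]
    [Module K M] [AddCommGroup N] [Module K N] {V W : Submodule K M} [FiniteDimensional K V]
    (f : M →ₗ[K] N) (hWV : W ≤ V) (hWf : W ≤ LinearMap.ker f) :
    finrank K (V.map f) + finrank K W ≤ finrank K V := by
  rw [← (f.domRestrict V).finrank_range_add_finrank_ker, LinearMap.range_domRestrict,
    LinearMap.ker_domRestrict, ← (Submodule.comapSubtypeEquivOfLe hWV).finrank_eq]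
  gcongr
  exact Submodule.finrank_mono (Submodule.comap_mono hWf)

theorem Nat.choose_two_add_add (m d e : ℕ) :
    (m + d + e + 2).choose 2 + (m + 2).choose 2 =
      (m + d + 2).choose 2 + (m + e + 2).choose 2 + d * e := by
  have hstep (n : ℕ) : (n + 1).choose 2 = n.choose 2 + n := by
    rw [Nat.choose_succ_succ, Nat.choose_one_right, add_comm]
  induction e with
  | zero => simp
  | succ e ih =>
    rw [show m + d + (e + 1) + 2 = m + d + e + 2 + 1 by ring,
      show m + (e + 1) + 2 = m + e + 2 + 1 by ring, hstep (m + d + e + 2), hstep (m + e + 2)]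
    linarith

namespace MvPolynomial

variable {σ K : Type*}

theorem IsHomogeneous.eval_smul [CommSemiring K] [Fintype σ] {φ : MvPolynomial σ K} {n : ℕ}
    (hφ : φ.IsHomogeneous n) (c : K) (v : σ → K) : eval (c • v) φ = c ^ n * eval v φ := by
  rw [eval_eq', eval_eq', Finset.mul_sum]
  refine Finset.sum_congr rfl fun m hm => ?_
  have hdeg : m.degree = n := by
    by_contra hne
    exact mem_support_iff.mp hm (hφ.coeff_eq_zero hne)
  simp only [Pi.smul_apply, smul_eq_mul, mul_pow, Finset.prod_mul_distrib,
    Finset.prod_pow_eq_pow_sum, ← Finsupp.degree_eq_sum, hdeg]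
  ring

attribute [local instance] MvPolynomial.gradedAlgebra in
theorem IsHomogeneous.homogeneousComponent_mul [CommSemiring K] {φ : MvPolynomial σ K} {d : ℕ}
    (hφ : φ.IsHomogeneous d) (ψ : MvPolynomial σ K) (n : ℕ) :
    homogeneousComponent (d + n) (φ * ψ) = φ * homogeneousComponent n ψ := by
  rw [← decomposition.decompose'_apply, ← decomposition.decompose'_apply]
  have := DirectSum.coe_decompose_mul_of_left_mem_of_le (𝒜 := homogeneousSubmodule σ K)
    (b := ψ) ((mem_homogeneousSubmodule d φ).mpr hφ) (Nat.le_add_right d n)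
  rwa [Nat.add_sub_cancel_left] at this

instance [CommRing K] [Finite σ] (n : ℕ) : Module.Finite K (homogeneousSubmodule σ K n) :=
  Module.Finite.iff_fg.mpr (homogeneousSubmodule_fg σ K n)

theorem finrank_homogeneousSubmodule [Field K] [Fintype σ] (n : ℕ) :
    finrank K (homogeneousSubmodule σ K n) = (Fintype.card σ).multichoose n := by
  classical
  have hsupp : {m : σ →₀ ℕ | m.degree = n} =
      ((Finset.univ : Finset σ).finsuppAntidiag n : Set (σ →₀ ℕ)) := by
    ext m
    simp [Finsupp.degree_eq_sum]
  rw [homogeneousSubmodule_eq_finsupp_supported, hsupp, ← restrictSupport,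
    finrank_eq_card_basis (basisRestrictSupport K _)]
  simp only [Finset.coe_sort_coe, Fintype.card_coe, Finset.card_finsuppAntidiag_nat_eq_multichoose,
    Finset.card_univ]

section Field

variable [Field K]

theorem IsHomogeneous.eval_rep_mk_eq_zero_iff [Fintype σ] {φ : MvPolynomial σ K} {n : ℕ}
    (hφ : φ.IsHomogeneous n) {v : σ → K} (hv : v ≠ 0) :
    eval (Projectivization.mk K v hv).rep φ = 0 ↔ eval v φ = 0 := by
  obtain ⟨a, ha⟩ := Projectivization.exists_smul_eq_mk_rep K v hv
  rw [← ha, Units.smul_def, hφ.eval_smul, mul_eq_zero, or_iff_right (pow_ne_zero _ a.ne_zero)]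

theorem exists_isHomogeneous_one_eval_rep_eq_zero_ne_zero {P Q : ℙ K (σ → K)} (hPQ : P ≠ Q) :
    ∃ L : MvPolynomial σ K, L.IsHomogeneous 1 ∧ eval Q.rep L = 0 ∧ eval P.rep L ≠ 0 := by
  obtain ⟨a, b, hab⟩ : ∃ a b, P.rep a * Q.rep b ≠ P.rep b * Q.rep a := by
    by_contra! h
    obtain ⟨b, hb⟩ : ∃ b, Q.rep b ≠ 0 := Function.ne_iff.mp Q.rep_nonzero
    refine hPQ ?_
    rw [← P.mk_rep, ← Q.mk_rep, Projectivization.mk_eq_mk_iff']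
    refine ⟨P.rep b / Q.rep b, ?_⟩
    funext a
    rw [Pi.smul_apply, smul_eq_mul, div_mul_eq_mul_div, div_eq_iff hb]
    linear_combination -h a b
  refine ⟨C (Q.rep b) * X a - C (Q.rep a) * X b,
    (isHomogeneous_C_mul_X _ a).sub (isHomogeneous_C_mul_X _ b), by simp [mul_comm], ?_⟩
  simp only [map_sub, map_mul, eval_C, eval_X]
  exact fun h => hab (by linear_combination h)

/-- A product of linear forms, one through each other point of `S`, padded to degree `n` by a
power of a coordinate not vanishing at `P`. -/
theorem exists_isHomogeneous_eval_rep_ne_zero_and_eq_zero_off {S : Finset (ℙ K (σ → K))}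
    {n : ℕ} (hn : S.card ≤ n + 1) {P : ℙ K (σ → K)} (hP : P ∈ S) :
    ∃ h : MvPolynomial σ K, h.IsHomogeneous n ∧ eval P.rep h ≠ 0 ∧
      ∀ Q ∈ S, Q ≠ P → eval Q.rep h = 0 := by
  classical
  have hL : ∀ Q ∈ S.erase P, ∃ L : MvPolynomial σ K,
      L.IsHomogeneous 1 ∧ eval Q.rep L = 0 ∧ eval P.rep L ≠ 0 :=
    fun Q hQ => exists_isHomogeneous_one_eval_rep_eq_zero_ne_zero (Finset.ne_of_mem_erase hQ).symm
  choose! L hL1 hLQ hLP using hL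
  obtain ⟨k, hk⟩ : ∃ k, P.rep k ≠ 0 := Function.ne_iff.mp P.rep_nonzero
  have hcard : (S.erase P).card + (n + 1 - S.card) = n := by
    have := Finset.card_pos.mpr ⟨P, hP⟩
    rw [Finset.card_erase_of_mem hP]
    omega
  refine ⟨(∏ Q ∈ S.erase P, L Q) * X k ^ (n + 1 - S.card), ?_, ?_, ?_⟩
  · have hprod := IsHomogeneous.prod (S.erase P) L (fun _ => 1) hL1
    simp only [Finset.sum_const, smul_eq_mul, mul_one] at hprod
    have := hprod.mul (isHomogeneous_X_pow k (n + 1 - S.card))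
    rwa [hcard] at this
  · simp only [map_mul, map_prod, map_pow, eval_X]
    exact mul_ne_zero (Finset.prod_ne_zero_iff.mpr hLP) (pow_ne_zero _ hk)
  · intro Q hQ hQP
    rw [map_mul, map_prod, Finset.prod_eq_zero (Finset.mem_erase.mpr ⟨hQP, hQ⟩)
      (hLQ Q (Finset.mem_erase.mpr ⟨hQP, hQ⟩)), zero_mul]

def evalOnReps (S : Finset (ℙ K (σ → K))) : MvPolynomial σ K →ₗ[K] (S → K) :=
  LinearMap.pi fun P => (aeval (P : ℙ K (σ → K)).rep).toLinearMap

@[simp]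
theorem evalOnReps_apply (S : Finset (ℙ K (σ → K))) (φ : MvPolynomial σ K) (P : S) :
    evalOnReps S φ P = eval (P : ℙ K (σ → K)).rep φ := by
  simp [evalOnReps, aeval_eq_eval]

theorem map_evalOnReps_homogeneousSubmodule {S : Finset (ℙ K (σ → K))} {n : ℕ}
    (hn : S.card ≤ n + 1) : (homogeneousSubmodule σ K n).map (evalOnReps S) = ⊤ := by
  refine eq_top_iff.mpr fun w _ => ?_
  choose h hhom hP hQ using fun P : S =>
    exists_isHomogeneous_eval_rep_ne_zero_and_eq_zero_off hn P.2
  refine ⟨∑ P : S, (w P / eval (P : ℙ K (σ → K)).rep (h P)) • h P,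
    Submodule.sum_mem _ fun P _ => Submodule.smul_mem _ _ (hhom P), ?_⟩
  funext P
  rw [evalOnReps_apply, map_sum, Finset.sum_eq_single P
    (fun Q _ hQP => by rw [smul_eval, hQ Q P P.2 (Subtype.coe_injective.ne hQP.symm), mul_zero])
    (by simp), smul_eval, div_mul_cancel₀ _ (hP P)]

theorem map_mulLeft_le_ker_evalOnReps {S : Finset (ℙ K (σ → K))} {f : MvPolynomial σ K}
    (hf : ∀ P ∈ S, eval P.rep f = 0) (p : Submodule K (MvPolynomial σ K)) :
    p.map (LinearMap.mulLeft K f) ≤ LinearMap.ker (evalOnReps S) := by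
  rintro _ ⟨a, -, rfl⟩
  ext P
  simp [hf P P.2]

theorem finrank_map_mulLeft {f : MvPolynomial σ K} (hf : f ≠ 0)
    (p : Submodule K (MvPolynomial σ K)) :
    finrank K (p.map (LinearMap.mulLeft K f)) = finrank K p :=
  (Submodule.equivMapOfInjective _ (mul_right_injective₀ hf) p).finrank_eq.symm

theorem IsHomogeneous.map_mulLeft_le {f : MvPolynomial σ K} {d : ℕ} (hf : f.IsHomogeneous d)
    (n : ℕ) :
    (homogeneousSubmodule σ K n).map (LinearMap.mulLeft K f) ≤
      homogeneousSubmodule σ K (d + n) := by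
  rintro _ ⟨a, ha, rfl⟩
  exact hf.mul ha

theorem map_mulLeft_inf_map_mulLeft_le {f g : MvPolynomial σ K} {d e : ℕ}
    (hf : f.IsHomogeneous d) (hg : g.IsHomogeneous e) (hfi : Irreducible f) (hgi : Irreducible g)
    (hfg : ¬Associated f g) (m : ℕ) :
    (homogeneousSubmodule σ K (m + e)).map (LinearMap.mulLeft K f) ⊓
        (homogeneousSubmodule σ K (m + d)).map (LinearMap.mulLeft K g) ≤
      (homogeneousSubmodule σ K m).map (LinearMap.mulLeft K (f * g)) := by
  rintro _ ⟨⟨a, ha, rfl⟩, ⟨b, -, hb⟩⟩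
  simp only [LinearMap.mulLeft_apply] at hb ⊢
  have hga : g ∣ a :=
    (hgi.prime.dvd_or_dvd ⟨b, hb.symm⟩).resolve_left
      fun hgf => hfg (hgi.associated_of_dvd hfi hgf).symm
  obtain ⟨c, rfl⟩ := hga
  have hhom : (f * g * c).IsHomogeneous (d + e + m) := by
    rw [mul_assoc, show d + e + m = d + (m + e) by ring]
    exact hf.mul ha
  refine ⟨homogeneousComponent m c, homogeneousComponent_isHomogeneous m c, ?_⟩
  rw [LinearMap.mulLeft_apply, ← (hf.mul hg).homogeneousComponent_mul,
    homogeneousComponent_eq_self hhom, mul_assoc]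

end Field

section ProjectivePlane

variable [Field K]

theorem finrank_homogeneousSubmodule_fin_three (n : ℕ) :
    finrank K (homogeneousSubmodule (Fin 3) K n) = (n + 2).choose 2 := by
  rw [finrank_homogeneousSubmodule, Fintype.card_fin, Nat.multichoose_eq,
    show 3 + n - 1 = n + 2 by omega, Nat.choose_symm_add]

theorem card_le_mul_of_forall_eval_rep_eq_zero {f g : MvPolynomial (Fin 3) K} {d e : ℕ}
    (hf : f.IsHomogeneous d) (hg : g.IsHomogeneous e) (hfi : Irreducible f) (hgi : Irreducible g)
    (hfg : ¬Associated f g) {S : Finset (ℙ K (Fin 3 → K))}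
    (hS : ∀ P ∈ S, eval P.rep f = 0 ∧ eval P.rep g = 0) : S.card ≤ d * e := by
  set Wf := (homogeneousSubmodule (Fin 3) K (S.card + e)).map (LinearMap.mulLeft K f)
  set Wg := (homogeneousSubmodule (Fin 3) K (S.card + d)).map (LinearMap.mulLeft K g)
  have hsup : Wf ⊔ Wg ≤ homogeneousSubmodule (Fin 3) K (S.card + d + e) :=
    sup_le ((hf.map_mulLeft_le _).trans_eq (congrArg _ (by ring)))
      ((hg.map_mulLeft_le _).trans_eq (congrArg _ (by ring)))
  have hker : Wf ⊔ Wg ≤ LinearMap.ker (evalOnReps S) :=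
    sup_le (map_mulLeft_le_ker_evalOnReps (fun P hP => (hS P hP).1) _)
      (map_mulLeft_le_ker_evalOnReps (fun P hP => (hS P hP).2) _)
  have hcount := Submodule.finrank_map_add_finrank_le (evalOnReps S) hsup hker
  rw [map_evalOnReps_homogeneousSubmodule (by omega), finrank_top, finrank_fintype_fun_eq_card,
    Fintype.card_coe, finrank_homogeneousSubmodule_fin_three] at hcount
  have hdim : finrank K ↥(Wf ⊔ Wg) + finrank K ↥(Wf ⊓ Wg) =
      (S.card + e + 2).choose 2 + (S.card + d + 2).choose 2 := by
    rw [Submodule.finrank_sup_add_finrank_inf_eq, finrank_map_mulLeft hfi.ne_zero,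
      finrank_map_mulLeft hgi.ne_zero, finrank_homogeneousSubmodule_fin_three,
      finrank_homogeneousSubmodule_fin_three]
  have hinf : finrank K ↥(Wf ⊓ Wg) ≤ (S.card + 2).choose 2 := by
    refine (Submodule.finrank_mono
      (map_mulLeft_inf_map_mulLeft_le hf hg hfi hgi hfg _)).trans_eq ?_
    rw [finrank_map_mulLeft (mul_ne_zero hfi.ne_zero hgi.ne_zero),
      finrank_homogeneousSubmodule_fin_three]
  have := Nat.choose_two_add_add S.card d e
  omega

theorem finite_and_ncard_le_of_forall_eval_rep_eq_zero {f g : MvPolynomial (Fin 3) K} {d e : ℕ}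
    (hf : f.IsHomogeneous d) (hg : g.IsHomogeneous e) (hfi : Irreducible f) (hgi : Irreducible g)
    (hfg : ¬Associated f g) {Z : Set (ℙ K (Fin 3 → K))}
    (hZ : ∀ P ∈ Z, eval P.rep f = 0 ∧ eval P.rep g = 0) : Z.Finite ∧ Z.ncard ≤ d * e := by
  have hcard {S : Finset (ℙ K (Fin 3 → K))} (hSZ : ↑S ⊆ Z) : S.card ≤ d * e :=
    card_le_mul_of_forall_eval_rep_eq_zero hf hg hfi hgi hfg fun P hP => hZ P (hSZ hP)
  have hZfin : Z.Finite := by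
    by_contra hinf
    obtain ⟨S, hSZ, hS⟩ := Set.Infinite.exists_subset_card_eq hinf (d * e + 1)
    have := hcard hSZ
    omega
  exact ⟨hZfin, Set.ncard_eq_toFinset_card Z hZfin ▸ hcard (by simp)⟩

end ProjectivePlane

end MvPolynomial

section HoughTransform

variable {t : ℕ} {F : MvPolynomial (Fin 2) (MvPolynomial (Fin t) ℝ)}

theorem mem_Gamma_iff {q : Fin 2 → ℝ} {mu : Fin t → ℝ} : mu ∈ Gamma F q ↔ q ∈ Curve F mu := by
  change eval mu (houghPoly F q) = 0 ↔ eval q (fLam F mu) = 0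
  rw [houghPoly, fLam, eval_map,
    eval₂_comp_left (eval mu) (RingHom.id _) (fun i => C (q i)) F]
  simp only [RingHom.comp_id, Function.comp_def, eval_C]

def liftPoint (q : Fin 2 → ℂ) : Fin 3 → ℂ := ![q 0, q 1, 1]

theorem liftPoint_ne_zero (q : Fin 2 → ℂ) : liftPoint q ≠ 0 :=
  Function.ne_iff.mpr ⟨2, by simp [liftPoint]⟩

theorem eval_liftPoint_projPoly (d : ℕ) (g : MvPolynomial (Fin 2) ℝ) (q : Fin 2 → ℂ) :
    eval (liftPoint q) (projPoly d g) = aeval q g := by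
  rw [projPoly, map_sum]
  conv_rhs => rw [g.as_sum, map_sum]
  refine Finset.sum_congr rfl fun m _ => ?_
  rw [eval_monomial, aeval_monomial, Finsupp.prod_fintype _ _ fun _ => pow_zero _,
    Finsupp.prod_fintype _ _ fun _ => pow_zero _, Fin.prod_univ_three, Fin.prod_univ_two]
  simp [liftPoint]

theorem projPoly_isHomogeneous {g : MvPolynomial (Fin 2) ℝ} {d : ℕ} (hg : g.totalDegree ≤ d) :
    (projPoly d g).IsHomogeneous d := by
  refine IsHomogeneous.sum _ _ _ fun m hm => isHomogeneous_monomial _ ?_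
  have hm : m 0 + m 1 ≤ d := by
    have := le_totalDegree hm
    rw [Finsupp.sum_fintype _ _ fun _ => rfl, Fin.sum_univ_two] at this
    omega
  simp [Finsupp.degree_eq_sum, Fin.sum_univ_three]
  omega

def realPoint (x : Fin 2 → ℝ) : ℙ ℂ (Fin 3 → ℂ) :=
  Projectivization.mk ℂ (liftPoint fun i => (x i : ℂ)) (liftPoint_ne_zero _)

theorem realPoint_injective : Function.Injective realPoint := by
  intro x y hxy
  obtain ⟨a, ha⟩ := (Projectivization.mk_eq_mk_iff' ℂ _ _ _ _).mp hxy
  have ha1 : a = 1 := by simpa [liftPoint] using congrFun ha 2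
  have h0 := congrFun ha 0
  have h1 := congrFun ha 1
  simp only [liftPoint, ha1, one_smul, Matrix.cons_val_zero, Matrix.cons_val_one,
    Complex.ofReal_inj] at h0 h1
  funext i
  fin_cases i
  exacts [h0.symm, h1.symm]

theorem eval_liftPoint_projPoly_eq_zero_iff (d : ℕ) (g : MvPolynomial (Fin 2) ℝ) (x : Fin 2 → ℝ) :
    eval (liftPoint fun i => (x i : ℂ)) (projPoly d g) = 0 ↔ eval x g = 0 := by
  rw [eval_liftPoint_projPoly]
  exact aeval_algebraMap_eq_zero_iff (B := ℂ) x g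

theorem eval_rep_realPoint_projPoly_eq_zero_iff {d : ℕ} {g : MvPolynomial (Fin 2) ℝ}
    (hg : g.totalDegree ≤ d) (x : Fin 2 → ℝ) :
    eval (realPoint x).rep (projPoly d g) = 0 ↔ eval x g = 0 := by
  rw [realPoint, (projPoly_isHomogeneous hg).eval_rep_mk_eq_zero_iff,
    eval_liftPoint_projPoly_eq_zero_iff]

theorem curve_eq_of_associated {d : ℕ} {lam mu : Fin t → ℝ}
    (h : Associated (projPoly d (fLam F lam)) (projPoly d (fLam F mu))) :
    Curve F lam = Curve F mu := by
  ext x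
  change eval x (fLam F lam) = 0 ↔ eval x (fLam F mu) = 0
  simp only [← eval_liftPoint_projPoly_eq_zero_iff d]
  exact (h.map (eval _)).eq_zero_iff

theorem mem_baff_of_realPoint_mem_baseLocus {U : Set (Fin t → ℝ)} {d : ℕ}
    (hstand : StandingAssumptions F U d) {x : Fin 2 → ℝ} (hx : realPoint x ∈ BaseLocus F U d) :
    (fun i => (x i : ℂ)) ∈ Baff F U := by
  intro lam hlam
  have := hx lam hlam
  rwa [realPoint, (projPoly_isHomogeneous (hstand lam hlam).2.1.le).eval_rep_mk_eq_zero_iff,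
    eval_liftPoint_projPoly] at this

end HoughTransform

theorem statement4_general (t d : ℕ)
    (F : MvPolynomial (Fin 2) (MvPolynomial (Fin t) ℝ)) (U : Set (Fin t → ℝ))
    (hstand : StandingAssumptions F U d)
    (lam : Fin t → ℝ) (hlam : lam ∈ U)
    (p : Fin (d ^ 2 - (BaseLocus F U d).ncard + 1) → (Fin 2 → ℝ))
    (hinj : Function.Injective p)
    (hp : ∀ j, p j ∈ Curve F lam ∧ (fun i => ((p j i : ℝ) : ℂ)) ∉ Baff F U)
    (hreg : HoughRegular F U) :
    (⋂ j, Gamma F (p j)) ∩ U = {lam} := by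
  refine Set.eq_singleton_iff_unique_mem.mpr
    ⟨⟨Set.mem_iInter.mpr fun j => mem_Gamma_iff.mpr (hp j).1, hlam⟩, ?_⟩
  rintro mu ⟨hmu, hmuU⟩
  by_contra hne
  have hpmu (j) : p j ∈ Curve F mu := mem_Gamma_iff.mp (Set.mem_iInter.mp hmu j)
  obtain ⟨-, hdlam, -, hirrlam, -⟩ := hstand lam hlam
  obtain ⟨-, hdmu, -, hirrmu, -⟩ := hstand mu hmuU
  have hZ : ∀ P ∈ BaseLocus F U d ∪ Set.range (realPoint ∘ p),
      eval P.rep (projPoly d (fLam F lam)) = 0 ∧ eval P.rep (projPoly d (fLam F mu)) = 0 := by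
    rintro P (hP | ⟨j, rfl⟩)
    · exact ⟨hP lam hlam, hP mu hmuU⟩
    · exact ⟨(eval_rep_realPoint_projPoly_eq_zero_iff hdlam.le _).mpr (hp j).1,
        (eval_rep_realPoint_projPoly_eq_zero_iff hdmu.le _).mpr (hpmu j)⟩
  obtain ⟨hZfin, hZcard⟩ := finite_and_ncard_le_of_forall_eval_rep_eq_zero
    (projPoly_isHomogeneous hdlam.le) (projPoly_isHomogeneous hdmu.le) hirrlam hirrmu
    (fun h => hne (hreg _ hlam _ hmuU (curve_eq_of_associated h)).symm) hZ
  have hdisj : Disjoint (BaseLocus F U d) (Set.range (realPoint ∘ p)) :=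
    Set.disjoint_right.mpr <| by
      rintro _ ⟨j, rfl⟩ hB
      exact (hp j).2 (mem_baff_of_realPoint_mem_baseLocus hstand hB)
  rw [Set.ncard_union_eq hdisj (hZfin.subset Set.subset_union_left)
    (hZfin.subset Set.subset_union_right),
    Set.ncard_range_of_injective (realPoint_injective.comp hinj), Nat.card_fin, ← sq] at hZcard
  omega

/-- Proposition, part 3. With `ν_opt := d² − #B(ℂ) + 1` and `ν_opt` distinct
real points `p_j ∈ C_λ \ B_aff`: if the family `𝓕` is Hough regular, then
`⋂_j Γ_{p_j}(𝓕) ∩ U = {λ}`. -/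
theorem statement4 (t d : ℕ) (hd : 0 < d)
    (F : MvPolynomial (Fin 2) (MvPolynomial (Fin t) ℝ)) (U : Set (Fin t → ℝ))
    (hstand : StandingAssumptions F U d)
    (hBfin : (BaseLocus F U d).Finite)
    (lam : Fin t → ℝ) (hlam : lam ∈ U)
    (p : Fin (d ^ 2 - (BaseLocus F U d).ncard + 1) → (Fin 2 → ℝ))
    (hinj : Function.Injective p)
    (hp : ∀ j, p j ∈ Curve F lam ∧ (fun i => ((p j i : ℝ) : ℂ)) ∉ Baff F U)
    (hreg : HoughRegular F U) :
    (⋂ j, Gamma F (p j)) ∩ U = {lam} :=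
  statement4_general t d F U hstand lam hlam p hinj hp hreg
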